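/- (Closed formula for the Igusa zeta function in the smooth case.) Let p be a prime, d ≥ 1, and f ∈ ℤ_p[x_1,…,x_d], and suppose the reduction f̄ ∈ F_p[x_1,…,x_d] defines a smooth hypersurface. Then for every s ∈ ℂ with Re(s) > 0, ∫_{ℤ_p^d} |f(z)|_p^s dμ(z) = p^{−d} N_1(f) (p−1) · p^{−1−s}/(1 − p^{−1−s}) + 1 − p^{−d} N_1(f), where N_1(f) is the number of a ∈ F_p^d with f̄(a) = 0. -/

import Mathlib

open MeasureTheory
open scoped ENNReal

noncomputable instance (p : ℕ) [Fact p.Prime] : MeasurableSpace ℤ_[p] := borel _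
instance (p : ℕ) [Fact p.Prime] : BorelSpace ℤ_[p] := ⟨rfl⟩

/-- The reduction `f̄ ∈ F_p[x_1,…,x_d]` of `f` modulo `p` defines a smooth
hypersurface: `f̄ ≠ 0` and at every `F_p`-point of `f̄ = 0` some partial
derivative of `f̄` does not vanish. -/
def SmoothModP (p : ℕ) [Fact p.Prime] (d : ℕ) (f : MvPolynomial (Fin d) ℤ_[p]) : Prop :=
  MvPolynomial.map (PadicInt.toZMod) f ≠ 0 ∧
    ∀ a : Fin d → ZMod p,
      MvPolynomial.eval a (MvPolynomial.map (PadicInt.toZMod) f) = 0 →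
        ∃ i : Fin d,
          MvPolynomial.eval a (MvPolynomial.pderiv i (MvPolynomial.map (PadicInt.toZMod) f)) ≠ 0

/-- `N_1(f)`: the number of `F_p`-rational points of the hypersurface `f̄ = 0`. -/
noncomputable def igusaN1 (p : ℕ) [Fact p.Prime] (d : ℕ)
    (f : MvPolynomial (Fin d) ℤ_[p]) : ℕ :=
  Nat.card {a : Fin d → ZMod p // MvPolynomial.eval a (MvPolynomial.map (PadicInt.toZMod) f) = 0}

/-!
Write `Z_k` for the set of `z ∈ ℤ_p^d` with `f(z) ≡ 0 mod p^k`. The set `Z_1` is the union of the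
`N_1(f)` residue balls of radius `1/p` over the zeros of `f̄`, so `μ(Z_1) = p^{-d} N_1(f)`. For
`k ≥ 1`, a ball of radius `p^{-k}` inside `Z_k` splits into `p^d` balls of radius `p^{-k-1}`, and by
first-order Taylor expansion the ones inside `Z_{k+1}` are indexed by the solutions in `F_p^d` of an
affine equation whose linear part is the gradient of `f̄` at the centre, which is nonzero by
smoothness. There are `p^{d-1}` such solutions, so `μ(Z_{k+1}) = μ(Z_k)/p`. Hence the measure of
`{|f| = p^{-m}} = Z_m \ Z_{m+1}` is explicit and the integral is a geometric series in `p^{-1-s}`.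
-/

open MvPolynomial Metric Finset
open scoped Matrix

namespace MvPolynomial

variable {R σ : Type*} [CommRing R] [Fintype σ]

theorem sq_dvd_eval_add_smul_sub_sub (f : MvPolynomial σ R) (z w : σ → R) (π : R) :
    π ^ 2 ∣ eval (z + π • w) f - eval z f - π * (w ⬝ᵥ fun j => eval z (pderiv j f)) := by
  classical
  induction f using MvPolynomial.induction_on with
  | C a => simp
  | add f g hf hg =>
    convert dvd_add hf hg using 1
    simp only [map_add, dotProduct, mul_add, Finset.sum_add_distrib]
    ring
  | mul_X f i ih =>
    obtain ⟨e, he⟩ := ih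
    have hgrad : (w ⬝ᵥ fun j => eval z (pderiv j (f * X i)))
        = (w ⬝ᵥ fun j => eval z (pderiv j f)) * z i + w i * eval z f := by
      simp only [Derivation.leibniz, pderiv_X, Pi.single_apply, smul_eq_mul, map_add, map_mul,
        eval_X, apply_ite (eval z), map_zero, dotProduct, mul_add, Finset.sum_add_distrib,
        mul_ite, mul_zero, Finset.sum_ite_eq, Finset.mem_univ, if_true, Finset.sum_mul, mul_one]
      simp only [mul_comm (z i), mul_assoc, add_comm]
    refine ⟨(w ⬝ᵥ fun j => eval z (pderiv j f)) * w i + e * (z i + π * w i), ?_⟩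
    simp only [hgrad, map_mul, eval_X, Pi.add_apply, Pi.smul_apply, smul_eq_mul]
    linear_combination (z i + π * w i) * he

theorem dvd_eval_add_smul_sub (f : MvPolynomial σ R) (z w : σ → R) (π : R) :
    π ∣ eval (z + π • w) f - eval z f := by
  obtain ⟨e, he⟩ := sq_dvd_eval_add_smul_sub_sub f z w π
  exact ⟨(w ⬝ᵥ fun j => eval z (pderiv j f)) + π * e, by linear_combination he⟩

end MvPolynomial

theorem card_filter_add_dotProduct_eq_zero {F ι : Type*} [Field F] [Fintype F] [DecidableEq F]
    [Fintype ι] [DecidableEq ι] (u : F) {b : ι → F} {i : ι} (hb : b i ≠ 0) :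
    #{t : ι → F | u + t ⬝ᵥ b = 0} = Fintype.card F ^ (Fintype.card ι - 1) := by
  let ℓ : (ι → F) →+ F := AddMonoidHom.mk' (· ⬝ᵥ b) fun x y => add_dotProduct x y b
  have hℓ : ∀ y, y ∈ Set.range ℓ := fun y =>
    ⟨Pi.single i (y / b i), by simp [ℓ, hb]⟩
  have hfiber : ∀ y, #{t | ℓ t = y} = #{t : ι → F | u + t ⬝ᵥ b = 0} := fun y => by
    rw [AddMonoidHom.card_fiber_eq_of_mem_range ℓ (hℓ y) (hℓ (-u))]
    congr 1; ext t; simp [ℓ, eq_neg_iff_add_eq_zero, add_comm]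
  have hcard : Fintype.card F ^ Fintype.card ι
      = Fintype.card F * #{t : ι → F | u + t ⬝ᵥ b = 0} := by
    rw [← Fintype.card_fun, ← Finset.card_univ,
      Finset.card_eq_sum_card_fiberwise (f := ℓ) (t := univ) (fun _ _ => mem_coe.2 (mem_univ _))]
    simp [hfiber]
  have : Nonempty ι := ⟨i⟩
  obtain ⟨n, hn⟩ : ∃ n, Fintype.card ι = n + 1 := Nat.exists_eq_succ_of_ne_zero Fintype.card_ne_zero
  rw [hn, pow_succ'] at hcard
  rw [hn, Nat.add_sub_cancel]
  exact (Nat.eq_of_mul_eq_mul_left Fintype.card_pos hcard).symm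

theorem Complex.natCast_zpow_neg_cpow (q n : ℕ) (s : ℂ) :
    (((q : ℝ) ^ (-n : ℤ) : ℝ) : ℂ) ^ s = ((q : ℂ) ^ (-s)) ^ n := by
  rw [← Complex.cpow_nat_mul, mul_neg, Complex.cpow_neg, Complex.natCast_cpow_natCast_mul,
    ← Complex.inv_cpow _ _ (by norm_cast; simp [Real.pi_ne_zero.symm])]
  push_cast
  rw [zpow_neg, zpow_natCast]

theorem Complex.norm_natCast_cpow_lt_one {n : ℕ} (hn : 1 < n) {z : ℂ} (hz : z.re < 0) :
    ‖(n : ℂ) ^ z‖ < 1 := by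
  rw [Complex.norm_natCast_cpow_of_pos (by omega)]
  exact Real.rpow_lt_one_of_one_lt_of_neg (by exact_mod_cast hn) hz

theorem tsum_mul_pow_of_eq_div_pow {a : ℕ → ℂ} {A r q : ℂ} (h0 : a 0 = 1 - A)
    (hsucc : ∀ m, a (m + 1) = A * (r - 1) / r ^ (m + 1)) (hq : ‖q / r‖ < 1) :
    ∑' m, a m * q ^ m = A * (r - 1) * (q / r / (1 - q / r)) + 1 - A := by
  have hterm : (fun m => a (m + 1) * q ^ (m + 1)) = fun m => A * (r - 1) * (q / r) * (q / r) ^ m :=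
    funext fun m => by rw [hsucc]; ring
  have hsum : Summable fun m => a m * q ^ m :=
    (summable_nat_add_iff 1).1 (hterm ▸ (summable_geometric_of_norm_lt_one hq).mul_left _)
  rw [hsum.tsum_eq_zero_add, hterm, tsum_mul_left, tsum_geometric_of_norm_lt_one hq, h0]
  ring

theorem measure_inter_eq_ite_of_forall_mem_iff {α : Type*} [MeasurableSpace α] (μ : Measure α)
    {s t : Set α} {P : Prop} [Decidable P] (h : ∀ x ∈ s, x ∈ t ↔ P) :
    μ (s ∩ t) = if P then μ s else 0 := by
  split_ifs with hP
  · rw [Set.inter_eq_left.2 fun x hx => (h x hx).2 hP]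
  · rw [Set.eq_empty_of_forall_notMem (s := s ∩ t) fun x hx => hP ((h x hx.1).1 hx.2),
      measure_empty]

namespace PadicInt

variable {p : ℕ} [Fact p.Prime]

theorem norm_le_pow_iff_dvd (x : ℤ_[p]) (n : ℕ) :
    ‖x‖ ≤ (p : ℝ) ^ (-n : ℤ) ↔ (p : ℤ_[p]) ^ n ∣ x := by
  rw [norm_le_pow_iff_mem_span_pow, Ideal.mem_span_singleton]

theorem toZMod_eq_zero_iff_dvd (x : ℤ_[p]) : toZMod x = 0 ↔ (p : ℤ_[p]) ∣ x := by
  rw [← RingHom.mem_ker, ker_toZMod, maximalIdeal_eq_span_p, Ideal.mem_span_singleton]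

theorem norm_eq_pow_iff_dvd_and_not_dvd (x : ℤ_[p]) (n : ℕ) :
    ‖x‖ = (p : ℝ) ^ (-n : ℤ) ↔ (p : ℤ_[p]) ^ n ∣ x ∧ ¬(p : ℤ_[p]) ^ (n + 1) ∣ x := by
  rw [← norm_le_pow_iff_dvd, ← norm_le_pow_iff_dvd, Nat.cast_succ, neg_add, ← sub_eq_add_neg,
    ← norm_lt_pow_iff_norm_le_pow_sub_one, not_lt, le_antisymm_iff]

theorem norm_eq_pow_iff_valuation_eq {x : ℤ_[p]} (hx : x ≠ 0) (n : ℕ) :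
    ‖x‖ = (p : ℝ) ^ (-n : ℤ) ↔ x.valuation = n := by
  rw [norm_eq_zpow_neg_valuation hx, (zpow_right_injective₀ (by simp [(Fact.out : p.Prime).pos])
    (by simp [(Fact.out : p.Prime).ne_one])).eq_iff, neg_inj, Nat.cast_inj]

theorem rightInverse_natCast_val_toZModPow (k : ℕ) :
    Function.RightInverse (fun t : ZMod (p ^ k) => (t.val : ℤ_[p])) (toZModPow k) := fun t => by
  have : NeZero (p ^ k) := ⟨pow_ne_zero k (Fact.out : p.Prime).ne_zero⟩
  rw [map_natCast, ZMod.natCast_zmod_val]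

theorem rightInverse_natCast_val_toZMod :
    Function.RightInverse (fun t : ZMod p => (t.val : ℤ_[p])) toZMod := fun t => by
  have : NeZero p := ⟨(Fact.out : p.Prime).ne_zero⟩
  rw [map_natCast, ZMod.natCast_zmod_val]

theorem ker_toZMod_eq_span_pow_one :
    RingHom.ker (toZMod : ℤ_[p] →+* ZMod p) = Ideal.span {(p : ℤ_[p]) ^ 1} := by
  rw [pow_one, ker_toZMod, maximalIdeal_eq_span_p]

theorem norm_cpow_eq_tsum_indicator (x : ℤ_[p]) {s : ℂ} (hs : s ≠ 0) :
    (‖x‖ : ℂ) ^ s = ∑' m : ℕ,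
      {y : ℤ_[p] | ‖y‖ = (p : ℝ) ^ (-m : ℤ)}.indicator (fun _ => ((p : ℂ) ^ (-s)) ^ m) x := by
  by_cases hx : x = 0
  · have hne : ∀ m : ℕ, x ∉ {y : ℤ_[p] | ‖y‖ = (p : ℝ) ^ (-m : ℤ)} := fun m h => by
      rw [Set.mem_ofPred_eq, hx, norm_zero] at h
      exact (zpow_pos (by exact_mod_cast (Fact.out : p.Prime).pos) _).ne h
    rw [tsum_congr fun m => Set.indicator_of_notMem (hne m) _, tsum_zero, hx, norm_zero,
      Complex.ofReal_zero, Complex.zero_cpow hs]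
  · have hmem : ∀ m : ℕ, x ∈ {y : ℤ_[p] | ‖y‖ = (p : ℝ) ^ (-m : ℤ)} ↔ x.valuation = m :=
      norm_eq_pow_iff_valuation_eq hx
    rw [tsum_eq_single x.valuation, Set.indicator_of_mem ((hmem _).2 rfl),
      ← Complex.natCast_zpow_neg_cpow, ← norm_eq_zpow_neg_valuation hx]
    exact fun m hm => Set.indicator_of_notMem (fun h => hm ((hmem m).1 h).symm) _

theorem integral_norm_cpow_eq_tsum {X : Type*} [MeasurableSpace X] (ν : Measure X)
    [IsFiniteMeasure ν] {g : X → ℤ_[p]} (hg : Measurable g) {s : ℂ} (hs : 0 < s.re) :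
    ∫ x, (‖g x‖ : ℂ) ^ s ∂ν
      = ∑' m : ℕ, (ν.real {x | ‖g x‖ = (p : ℝ) ^ (-m : ℤ)} : ℂ) * ((p : ℂ) ^ (-s)) ^ m := by
  set q := (p : ℂ) ^ (-s)
  set E : ℕ → Set X := fun m => {x | ‖g x‖ = (p : ℝ) ^ (-m : ℤ)}
  have hE : ∀ m, MeasurableSet (E m) := fun m => hg.norm (measurableSet_singleton _)
  have hq : ‖q‖ₑ < 1 := by
    rw [← ofReal_norm]
    exact ENNReal.ofReal_lt_one.2
      (Complex.norm_natCast_cpow_lt_one (Fact.out : p.Prime).one_lt (by simpa using hs))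
  have hs0 : s ≠ 0 := by rintro rfl; simp at hs
  have hbound : ∑' m, ∫⁻ x, ‖(E m).indicator (fun _ => q ^ m) x‖ₑ ∂ν ≠ ⊤ := by
    refine ne_top_of_le_ne_top (b := ∑' m, ‖q‖ₑ ^ m * ν Set.univ) ?_
      (ENNReal.tsum_le_tsum fun m => ?_)
    · rw [ENNReal.tsum_mul_right, ENNReal.tsum_geometric]
      exact ENNReal.mul_ne_top (ENNReal.inv_ne_top.2 (tsub_pos_of_lt hq).ne') (measure_ne_top _ _)
    · simp_rw [enorm_indicator_eq_indicator_enorm]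
      rw [lintegral_indicator_const (hE m), enorm_pow]
      gcongr
      exact Set.subset_univ _
  calc ∫ x, (‖g x‖ : ℂ) ^ s ∂ν = ∫ x, ∑' m, (E m).indicator (fun _ => q ^ m) x ∂ν :=
        integral_congr_ae (.of_forall fun x => norm_cpow_eq_tsum_indicator (g x) hs0)
    _ = ∑' m, ∫ x, (E m).indicator (fun _ => q ^ m) x ∂ν :=
        integral_tsum (fun m => aestronglyMeasurable_const.indicator (hE m)) hbound
    _ = _ := tsum_congr fun m => by rw [integral_indicator_const _ (hE m), Complex.real_smul]

end PadicInt

open PadicInt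

section

variable {p : ℕ} [Fact p.Prime] {d : ℕ}

theorem closedBall_one_eq_univ (z₀ : Fin d → ℤ_[p]) : closedBall z₀ 1 = Set.univ :=
  Set.eq_univ_of_forall fun z => by
    simpa [dist_eq_norm, pi_norm_le_iff_of_nonneg] using fun j => norm_le_one (z j - z₀ j)

theorem mem_closedBall_pow_iff_exists {z z₀ : Fin d → ℤ_[p]} {k : ℕ} :
    z ∈ closedBall z₀ ((p : ℝ) ^ (-k : ℤ)) ↔ ∃ w, z = z₀ + (p : ℤ_[p]) ^ k • w := by
  simp only [mem_closedBall, dist_eq_norm, Pi.sub_apply, norm_le_pow_iff_dvd,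
    pi_norm_le_iff_of_nonneg (zpow_nonneg (Nat.cast_nonneg p) _)]
  constructor
  · intro h
    choose w hw using h
    exact ⟨w, funext fun j => by simp [← hw j]⟩
  · rintro ⟨w, rfl⟩ j
    exact ⟨w j, by simp⟩

section Subdivision

variable {S : Type*} [Ring S] {φ : ℤ_[p] →+* S} {m : ℕ} {σ : S → ℤ_[p]}

theorem iUnion_closedBall_add_smul (hφ : RingHom.ker φ = Ideal.span {(p : ℤ_[p]) ^ m})
    (hσ : Function.RightInverse σ φ) (z₀ : Fin d → ℤ_[p]) (k : ℕ) :
    ⋃ t : Fin d → S, closedBall (z₀ + (p : ℤ_[p]) ^ k • (σ ∘ t)) ((p : ℝ) ^ (-(k + m : ℕ) : ℤ))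
      = closedBall z₀ ((p : ℝ) ^ (-k : ℤ)) := by
  ext z
  simp only [Set.mem_iUnion, mem_closedBall_pow_iff_exists]
  constructor
  · rintro ⟨t, w, rfl⟩
    exact ⟨σ ∘ t + (p : ℤ_[p]) ^ m • w, by rw [smul_add, smul_smul, ← pow_add, add_assoc]⟩
  · rintro ⟨w, rfl⟩
    have hdvd : ∀ j, (p : ℤ_[p]) ^ m ∣ w j - σ (φ (w j)) := fun j => by
      rw [← Ideal.mem_span_singleton, ← hφ, RingHom.mem_ker, map_sub, hσ, sub_self]
    choose v hv using hdvd
    refine ⟨φ ∘ w, v, funext fun j => ?_⟩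
    simp only [Pi.add_apply, Pi.smul_apply, smul_eq_mul, Function.comp_apply, pow_add]
    linear_combination (p : ℤ_[p]) ^ k * hv j

theorem pairwise_disjoint_closedBall_add_smul
    (hφ : RingHom.ker φ = Ideal.span {(p : ℤ_[p]) ^ m}) (hσ : Function.RightInverse σ φ)
    (z₀ : Fin d → ℤ_[p]) (k : ℕ) :
    Pairwise (Function.onFun Disjoint fun t : Fin d → S =>
      closedBall (z₀ + (p : ℤ_[p]) ^ k • (σ ∘ t)) ((p : ℝ) ^ (-(k + m : ℕ) : ℤ))) := by
  intro t t' htt'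
  refine Set.disjoint_left.2 fun z hz hz' => htt' (funext fun j => ?_)
  obtain ⟨v, rfl⟩ := mem_closedBall_pow_iff_exists.1 hz
  obtain ⟨v', hv'⟩ := mem_closedBall_pow_iff_exists.1 hz'
  have hj := congr_fun hv' j
  simp only [Pi.add_apply, Pi.smul_apply, smul_eq_mul, Function.comp_apply, pow_add] at hj
  have hp : (p : ℤ_[p]) ^ k ≠ 0 := pow_ne_zero k (Nat.cast_ne_zero.2 (Fact.out : p.Prime).ne_zero)
  have hσt : σ (t j) - σ (t' j) = (p : ℤ_[p]) ^ m * (v' j - v j) :=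
    mul_left_cancel₀ hp (by linear_combination hj)
  rw [← hσ (t j), ← hσ (t' j), ← sub_eq_zero, ← map_sub, ← RingHom.mem_ker, hφ,
    Ideal.mem_span_singleton]
  exact ⟨_, hσt⟩

theorem measure_closedBall_inter_eq_sum [Fintype S]
    (hφ : RingHom.ker φ = Ideal.span {(p : ℤ_[p]) ^ m}) (hσ : Function.RightInverse σ φ)
    (μ : Measure (Fin d → ℤ_[p])) (z₀ : Fin d → ℤ_[p]) (k : ℕ) {A : Set (Fin d → ℤ_[p])}
    (hA : MeasurableSet A) :
    μ (closedBall z₀ ((p : ℝ) ^ (-k : ℤ)) ∩ A) = ∑ t : Fin d → S,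
      μ (closedBall (z₀ + (p : ℤ_[p]) ^ k • (σ ∘ t)) ((p : ℝ) ^ (-(k + m : ℕ) : ℤ)) ∩ A) := by
  rw [← iUnion_closedBall_add_smul hφ hσ, Set.iUnion_inter, measure_iUnion, tsum_fintype]
  · exact fun t t' h => (pairwise_disjoint_closedBall_add_smul hφ hσ z₀ k h).mono
      Set.inter_subset_left Set.inter_subset_left
  · exact fun t => measurableSet_closedBall.inter hA

theorem measure_eq_sum_measure_closedBall_inter [Fintype S]
    (hφ : RingHom.ker φ = Ideal.span {(p : ℤ_[p]) ^ m}) (hσ : Function.RightInverse σ φ)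
    (μ : Measure (Fin d → ℤ_[p])) {A : Set (Fin d → ℤ_[p])} (hA : MeasurableSet A) :
    μ A = ∑ t : Fin d → S, μ (closedBall (σ ∘ t) ((p : ℝ) ^ (-m : ℤ)) ∩ A) := by
  simpa [closedBall_one_eq_univ] using measure_closedBall_inter_eq_sum hφ hσ μ 0 0 hA

end Subdivision

theorem measure_closedBall_pow (μ : Measure (Fin d → ℤ_[p])) [μ.IsAddHaarMeasure]
    (hμ : μ Set.univ = 1) (z : Fin d → ℤ_[p]) (k : ℕ) :
    μ (closedBall z ((p : ℝ) ^ (-k : ℤ))) = (((p : ℝ≥0∞) ^ k) ^ d)⁻¹ := by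
  have : NeZero (p ^ k) := ⟨pow_ne_zero k (Fact.out : p.Prime).ne_zero⟩
  have h := measure_eq_sum_measure_closedBall_inter (ker_toZModPow k)
    (rightInverse_natCast_val_toZModPow k) μ MeasurableSet.univ
  simp only [Set.inter_univ, hμ, Measure.addHaar_closedBall_center μ, Finset.sum_const,
    Finset.card_univ, Fintype.card_fun, ZMod.card, Fintype.card_fin, nsmul_eq_mul] at h
  rw [Measure.addHaar_closedBall_center]
  refine ENNReal.eq_inv_of_mul_eq_one_left ?_
  rw [mul_comm]
  exact_mod_cast h.symm

def zeroLocusModPow (f : MvPolynomial (Fin d) ℤ_[p]) (k : ℕ) : Set (Fin d → ℤ_[p]) :=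
  {z | (p : ℤ_[p]) ^ k ∣ eval z f}

variable {f : MvPolynomial (Fin d) ℤ_[p]}

theorem measurableSet_zeroLocusModPow (k : ℕ) : MeasurableSet (zeroLocusModPow f k) := by
  have : zeroLocusModPow f k = (fun z => eval z f) ⁻¹' closedBall 0 ((p : ℝ) ^ (-k : ℤ)) := by
    ext z
    rw [Set.mem_preimage, mem_closedBall, dist_zero_right, norm_le_pow_iff_dvd]
    rfl
  rw [this]
  exact (continuous_eval f).measurable measurableSet_closedBall

theorem zeroLocusModPow_antitone : Antitone (zeroLocusModPow f) :=
  fun _ _ hkl _ hz => (pow_dvd_pow _ hkl).trans hz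

theorem zeroLocusModPow_zero : zeroLocusModPow f 0 = Set.univ := by
  simp [zeroLocusModPow]

theorem setOf_norm_eval_eq_pow (m : ℕ) :
    {z | ‖eval z f‖ = (p : ℝ) ^ (-m : ℤ)} = zeroLocusModPow f m \ zeroLocusModPow f (m + 1) := by
  ext z
  exact norm_eq_pow_iff_dvd_and_not_dvd (eval z f) m

theorem measureReal_setOf_norm_eval_eq_pow (μ : Measure (Fin d → ℤ_[p])) [IsFiniteMeasure μ]
    (m : ℕ) :
    μ.real {z | ‖eval z f‖ = (p : ℝ) ^ (-m : ℤ)}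
      = μ.real (zeroLocusModPow f m) - μ.real (zeroLocusModPow f (m + 1)) := by
  rw [setOf_norm_eval_eq_pow, measureReal_sdiff (zeroLocusModPow_antitone m.le_succ)
    (measurableSet_zeroLocusModPow _)]

theorem mem_zeroLocusModPow_iff_of_mem_closedBall {k : ℕ} {z z₀ : Fin d → ℤ_[p]}
    (hz : z ∈ closedBall z₀ ((p : ℝ) ^ (-k : ℤ))) :
    z ∈ zeroLocusModPow f k ↔ z₀ ∈ zeroLocusModPow f k := by
  obtain ⟨w, rfl⟩ := mem_closedBall_pow_iff_exists.1 hz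
  exact dvd_iff_dvd_of_dvd_sub (dvd_eval_add_smul_sub f z₀ w _)

theorem mem_zeroLocusModPow_one_iff {a : Fin d → ZMod p} {z : Fin d → ℤ_[p]}
    (hz : z ∈ closedBall ((fun t : ZMod p => (t.val : ℤ_[p])) ∘ a) ((p : ℝ) ^ (-(1 : ℕ) : ℤ))) :
    z ∈ zeroLocusModPow f 1 ↔ eval a (map toZMod f) = 0 := by
  obtain ⟨w, rfl⟩ := mem_closedBall_pow_iff_exists.1 hz
  rw [zeroLocusModPow, Set.mem_ofPred_eq, pow_one, ← toZMod_eq_zero_iff_dvd, map_eval]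
  congr!
  ext j
  simp

theorem mem_zeroLocusModPow_succ_iff {σ : ZMod p → ℤ_[p]}
    (hσ : Function.RightInverse σ toZMod) {k : ℕ} (hk : 1 ≤ k) {z₀ : Fin d → ℤ_[p]} {u : ℤ_[p]}
    (hu : eval z₀ f = (p : ℤ_[p]) ^ k * u) {t : Fin d → ZMod p} {z : Fin d → ℤ_[p]}
    (hz : z ∈ closedBall (z₀ + (p : ℤ_[p]) ^ k • (σ ∘ t)) ((p : ℝ) ^ (-(k + 1 : ℕ) : ℤ))) :
    z ∈ zeroLocusModPow f (k + 1) ↔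
      toZMod u + t ⬝ᵥ (fun j => toZMod (eval z₀ (pderiv j f))) = 0 := by
  obtain ⟨v, rfl⟩ := mem_closedBall_pow_iff_exists.1 hz
  set w := σ ∘ t + (p : ℤ_[p]) • v
  have hzw : z₀ + (p : ℤ_[p]) ^ k • (σ ∘ t) + (p : ℤ_[p]) ^ (k + 1) • v
      = z₀ + (p : ℤ_[p]) ^ k • w := by
    rw [smul_add, pow_succ, mul_smul, add_assoc]
  have hw : toZMod ∘ w = t := funext fun j => by simp [w, hσ (t j)]
  -- Taylor: `f(z₀ + p^k w) ≡ p^k (u + w ⬝ ∇f(z₀)) mod p^(2k)`, and `2k ≥ k + 1`.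
  obtain ⟨e, he⟩ := sq_dvd_eval_add_smul_sub_sub f z₀ w ((p : ℤ_[p]) ^ k)
  have hval : eval (z₀ + (p : ℤ_[p]) ^ k • w) f
      = (p : ℤ_[p]) ^ k * (u + (w ⬝ᵥ fun j => eval z₀ (pderiv j f)) + (p : ℤ_[p]) ^ k * e) := by
    linear_combination he + hu
  rw [zeroLocusModPow, Set.mem_ofPred_eq, hzw, hval, pow_succ,
    mul_dvd_mul_iff_left (pow_ne_zero k (Nat.cast_ne_zero.2 (Fact.out : p.Prime).ne_zero)),
    ← toZMod_eq_zero_iff_dvd, map_add, map_add, RingHom.map_dotProduct, hw]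
  simp [Function.comp_def, Nat.one_le_iff_ne_zero.1 hk]

theorem SmoothModP.exists_toZMod_eval_pderiv_ne_zero (hf : SmoothModP p d f)
    {z : Fin d → ℤ_[p]} (hz : z ∈ zeroLocusModPow f 1) :
    ∃ i, toZMod (eval z (pderiv i f)) ≠ 0 := by
  obtain ⟨i, hi⟩ := hf.2 (toZMod ∘ z) (by
    rw [← map_eval, toZMod_eq_zero_iff_dvd]
    simpa [zeroLocusModPow] using hz)
  exact ⟨i, by rwa [map_eval, ← pderiv_map]⟩

variable (μ : Measure (Fin d → ℤ_[p])) [μ.IsAddHaarMeasure]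

theorem measure_zeroLocusModPow_one (hμ : μ Set.univ = 1) :
    μ (zeroLocusModPow f 1) = igusaN1 p d f * ((p : ℝ≥0∞) ^ d)⁻¹ := by
  classical
  rw [measure_eq_sum_measure_closedBall_inter ker_toZMod_eq_span_pow_one
    rightInverse_natCast_val_toZMod μ (measurableSet_zeroLocusModPow 1),
    Finset.sum_congr rfl fun a _ => (measure_inter_eq_ite_of_forall_mem_iff μ fun z hz =>
    mem_zeroLocusModPow_one_iff hz).trans (by rw [measure_closedBall_pow μ hμ, pow_one]),
    Finset.sum_ite, Finset.sum_const_zero, add_zero, Finset.sum_const, nsmul_eq_mul, igusaN1,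
    Nat.card_eq_fintype_card, Fintype.card_subtype]

theorem natCast_mul_measure_closedBall_inter_zeroLocusModPow_succ (hμ : μ Set.univ = 1)
    {k : ℕ} (hk : 1 ≤ k) {z₀ : Fin d → ℤ_[p]} (hz₀ : z₀ ∈ zeroLocusModPow f k) {i : Fin d}
    (hi : toZMod (eval z₀ (pderiv i f)) ≠ 0) :
    p * μ (closedBall z₀ ((p : ℝ) ^ (-k : ℤ)) ∩ zeroLocusModPow f (k + 1))
      = μ (closedBall z₀ ((p : ℝ) ^ (-k : ℤ))) := by
  classical
  obtain ⟨u, hu⟩ := hz₀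
  rw [measure_closedBall_inter_eq_sum ker_toZMod_eq_span_pow_one rightInverse_natCast_val_toZMod
    μ z₀ k (measurableSet_zeroLocusModPow (k + 1)),
    Finset.sum_congr rfl fun t _ => (measure_inter_eq_ite_of_forall_mem_iff μ fun z hz =>
      mem_zeroLocusModPow_succ_iff rightInverse_natCast_val_toZMod hk hu hz).trans
        (by rw [measure_closedBall_pow μ hμ]),
    Finset.sum_ite, Finset.sum_const_zero, add_zero, Finset.sum_const, nsmul_eq_mul,
    card_filter_add_dotProduct_eq_zero (b := fun j => toZMod (eval z₀ (pderiv j f))) _ hi,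
    ZMod.card, Fintype.card_fin, measure_closedBall_pow μ hμ]
  obtain ⟨n, rfl⟩ : ∃ n, d = n + 1 := Nat.exists_eq_succ_of_ne_zero i.pos.ne'
  have hp0 : (p : ℝ≥0∞) ≠ 0 := by simp [(Fact.out : p.Prime).ne_zero]
  have hsplit : ((p : ℝ≥0∞) ^ (k + 1)) ^ (n + 1) = (p * p ^ n) * ((p : ℝ≥0∞) ^ k) ^ (n + 1) := by
    ring
  rw [Nat.add_sub_cancel, hsplit,
    ENNReal.mul_inv (Or.inr (by finiteness)) (Or.inl (by finiteness)), ← mul_assoc, ← mul_assoc,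
    Nat.cast_pow, ENNReal.mul_inv_cancel (by simp [hp0]) (by finiteness), one_mul]

theorem natCast_mul_measure_zeroLocusModPow_succ (hμ : μ Set.univ = 1) (hf : SmoothModP p d f)
    {k : ℕ} (hk : 1 ≤ k) :
    p * μ (zeroLocusModPow f (k + 1)) = μ (zeroLocusModPow f k) := by
  rw [measure_eq_sum_measure_closedBall_inter (ker_toZModPow k)
      (rightInverse_natCast_val_toZModPow k) μ (measurableSet_zeroLocusModPow (k + 1)),
    measure_eq_sum_measure_closedBall_inter (ker_toZModPow k)
      (rightInverse_natCast_val_toZModPow k) μ (measurableSet_zeroLocusModPow k), Finset.mul_sum]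
  refine Finset.sum_congr rfl fun c _ => ?_
  set y : Fin d → ℤ_[p] := (fun t : ZMod (p ^ k) => (t.val : ℤ_[p])) ∘ c
  by_cases hy : y ∈ zeroLocusModPow f k
  · rw [Set.inter_eq_left.2 fun z hz => (mem_zeroLocusModPow_iff_of_mem_closedBall hz).2 hy]
    obtain ⟨i, hi⟩ := hf.exists_toZMod_eval_pderiv_ne_zero (zeroLocusModPow_antitone hk hy)
    exact natCast_mul_measure_closedBall_inter_zeroLocusModPow_succ μ hμ hk hy hi
  · have hempty : closedBall y ((p : ℝ) ^ (-k : ℤ)) ∩ zeroLocusModPow f k = ∅ :=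
      Set.eq_empty_of_forall_notMem fun z hz =>
        hy ((mem_zeroLocusModPow_iff_of_mem_closedBall hz.1).1 hz.2)
    rw [hempty, measure_empty, measure_mono_null (Set.inter_subset_inter_right _
      (zeroLocusModPow_antitone k.le_succ)) (hempty ▸ measure_empty), mul_zero]

theorem measure_zeroLocusModPow_succ (hμ : μ Set.univ = 1) (hf : SmoothModP p d f) (k : ℕ) :
    μ (zeroLocusModPow f (k + 1)) = igusaN1 p d f * ((p : ℝ≥0∞) ^ (d + k))⁻¹ := by
  have hp0 : (p : ℝ≥0∞) ≠ 0 := by simp [(Fact.out : p.Prime).ne_zero]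
  induction k with
  | zero => rw [measure_zeroLocusModPow_one μ hμ, add_zero]
  | succ k ih =>
    have h := natCast_mul_measure_zeroLocusModPow_succ μ hμ hf k.succ_pos
    rw [ih] at h
    rw [← add_assoc, pow_succ, ENNReal.mul_inv (Or.inr (by finiteness)) (Or.inl (by finiteness)),
      ← mul_assoc, ← h, mul_comm (p : ℝ≥0∞), mul_assoc,
      ENNReal.mul_inv_cancel hp0 (by finiteness), mul_one]


theorem measureReal_zeroLocusModPow_succ (hμ : μ Set.univ = 1) (hf : SmoothModP p d f) (k : ℕ) :
    μ.real (zeroLocusModPow f (k + 1)) = igusaN1 p d f / (p : ℝ) ^ (d + k) := by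
  simp [measureReal_def, measure_zeroLocusModPow_succ μ hμ hf, div_eq_mul_inv]

end

theorem igusa_zeta_smooth_general (p : ℕ) [Fact p.Prime] (d : ℕ)
    (f : MvPolynomial (Fin d) ℤ_[p]) (hf : SmoothModP p d f)
    (μ : Measure (Fin d → ℤ_[p])) [μ.IsAddHaarMeasure] (hμ : μ Set.univ = 1)
    (s : ℂ) (hs : 0 < s.re) :
    ∫ z : Fin d → ℤ_[p], (‖MvPolynomial.eval z f‖ : ℂ) ^ s ∂μ
      = (p : ℂ) ^ (-(d : ℂ)) * (igusaN1 p d f : ℂ) * ((p : ℂ) - 1)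
            * ((p : ℂ) ^ (-1 - s) / (1 - (p : ℂ) ^ (-1 - s)))
          + 1 - (p : ℂ) ^ (-(d : ℂ)) * (igusaN1 p d f : ℂ) := by
  have : IsFiniteMeasure μ := ⟨by simp [hμ]⟩
  have hp : (p : ℂ) ≠ 0 := by exact_mod_cast (Fact.out : p.Prime).ne_zero
  have hQ : (p : ℂ) ^ (-s) / p = (p : ℂ) ^ (-1 - s) := by
    rw [show -1 - s = -s - 1 by ring, Complex.cpow_sub _ _ hp, Complex.cpow_one]
  rw [integral_norm_cpow_eq_tsum μ (continuous_eval f).measurable hs,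
    tsum_mul_pow_of_eq_div_pow (A := igusaN1 p d f / (p : ℂ) ^ d) (r := p), hQ, Complex.cpow_neg,
    Complex.cpow_natCast]
  · ring
  · rw [measureReal_setOf_norm_eval_eq_pow μ, zeroLocusModPow_zero, measureReal_def, hμ,
      ENNReal.toReal_one, measureReal_zeroLocusModPow_succ μ hμ hf]
    push_cast
    ring
  · intro m
    rw [measureReal_setOf_norm_eval_eq_pow μ, measureReal_zeroLocusModPow_succ μ hμ hf,
      measureReal_zeroLocusModPow_succ μ hμ hf]
    push_cast
    field_simp
    ring
  · rw [hQ]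
    refine Complex.norm_natCast_cpow_lt_one (Fact.out : p.Prime).one_lt ?_
    simp only [Complex.sub_re, Complex.neg_re, Complex.one_re]
    linarith

/-- (Closed formula for the Igusa zeta function in the smooth
case.)  If the reduction of `f` mod `p` defines a smooth hypersurface, then for
`Re(s) > 0`,
`∫ |f(z)|_p^s dμ = p^{-d} N_1(f) (p-1) p^{-1-s}/(1-p^{-1-s}) + 1 - p^{-d} N_1(f)`,
where `μ` is the Haar measure on `ℤ_p^d` normalized by `μ(ℤ_p^d) = 1`. -/
theorem igusa_zeta_smooth (p : ℕ) [Fact p.Prime] (d : ℕ) (hd : 1 ≤ d)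
    (f : MvPolynomial (Fin d) ℤ_[p]) (hf : SmoothModP p d f)
    (μ : Measure (Fin d → ℤ_[p])) [μ.IsAddHaarMeasure] (hμ : μ Set.univ = 1)
    (s : ℂ) (hs : 0 < s.re) :
    ∫ z : Fin d → ℤ_[p], (‖MvPolynomial.eval z f‖ : ℂ) ^ s ∂μ
      = (p : ℂ) ^ (-(d : ℂ)) * (igusaN1 p d f : ℂ) * ((p : ℂ) - 1)
            * ((p : ℂ) ^ (-1 - s) / (1 - (p : ℂ) ^ (-1 - s)))
          + 1 - (p : ℂ) ^ (-(d : ℂ)) * (igusaN1 p d f : ℂ) :=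
  igusa_zeta_smooth_general p d f hf μ hμ s hs
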